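/- Let G be a graph on n vertices that is not 2-paintable. Then M(G) ≤ 2n − 3, and M(G) = 2n − 3 if and only if G contains a triangle C₃. -/
import Mathlib


/- # Preliminaries: the online list-coloring (painting) game -/

namespace PaintGame

open SimpleGraph

/-- `X` is an independent set of vertices of `G`. -/
def IndepOn {V : Type} (G : SimpleGraph V) (X : Finset V) : Prop :=
  ∀ u ∈ X, ∀ w ∈ X, ¬ G.Adj u w

/-- Decrease the remaining mark-capacity of every vertex in the marked set `M` by one. -/
def decMark {V : Type} [DecidableEq V] (f : V → ℕ) (M : Finset V) : V → ℕ :=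
  fun v => if v ∈ M then f v - 1 else f v

theorem decMark_lt {V : Type} [Fintype V] [DecidableEq V] (f : V → ℕ) (M : Finset V)
    (hne : M.Nonempty) (hf : ∀ v ∈ M, 1 ≤ f v) :
    ∑ v, decMark f M v < ∑ v, f v := by
  obtain ⟨v₀, hv₀⟩ := hne
  apply Finset.sum_lt_sum
  · intro i _
    unfold decMark
    split <;> omega
  · refine ⟨v₀, Finset.mem_univ v₀, ?_⟩
    have := hf v₀ hv₀
    simp only [decMark, if_pos hv₀]
    omega

/-- Painter wins the (unbounded) painting game on `G` from the position in which `U` is the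
set of uncolored vertices and `f v` is the number of further times `v` may be marked.
Each round, Lister marks a nonempty set `M` of uncolored vertices, each of which may still
be marked; Painter then colors an independent subset `X` of `M`.  Painter wins when every
vertex is colored; Painter has lost if some uncolored vertex can no longer be marked. -/
def PaintFrom {V : Type} [Fintype V] [DecidableEq V] (G : SimpleGraph V)
    (f : V → ℕ) (U : Finset V) : Prop :=
  U = ∅ ∨ ((∀ v ∈ U, 1 ≤ f v) ∧
    ∀ M : Finset V, M ⊆ U → (hne : M.Nonempty) → (hf : ∀ v ∈ M, 1 ≤ f v) →
      ∃ X : Finset V, X ⊆ M ∧ IndepOn G X ∧ PaintFrom G (decMark f M) (U \ X))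
termination_by ∑ v, f v
decreasing_by exact decMark_lt f M hne hf

/-- `G` is `f`-paintable: Painter can guarantee that every vertex of `G` gets colored
while no vertex `v` is marked more than `f v` times. -/
def Paintable {V : Type} [Fintype V] [DecidableEq V] (G : SimpleGraph V) (f : V → ℕ) : Prop :=
  PaintFrom G f Finset.univ

/-- Painter wins the painting game on `G` lasting exactly `t` further rounds, where `U`
is the set of uncolored vertices and each vertex `v` must be marked in exactly `f v` of the
remaining rounds.  Each round Lister marks a nonempty set `M` of vertices that can still be
marked (colored vertices may be marked, since the marked sets are the color classes of a
fixed list assignment using exactly `t` colors); Painter colors an independent set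
`X ⊆ M` of uncolored vertices.  At the end, Painter wins if every vertex got colored, or by
default if Lister failed to mark every vertex `v` exactly `f v` times. -/
def PaintFromIn {V : Type} [DecidableEq V] (G : SimpleGraph V) :
    ℕ → (V → ℕ) → Finset V → Prop
  | 0, f, U => U = ∅ ∨ ∃ v, f v ≠ 0
  | (t + 1), f, U =>
      ∀ M : Finset V, M.Nonempty → (∀ v ∈ M, 1 ≤ f v) →
        ∃ X : Finset V, X ⊆ M ∩ U ∧ IndepOn G X ∧
          PaintFromIn G t (decMark f M) (U \ X)

/-- `G` is `[f,t]`-paintable: Painter can guarantee that every vertex gets colored in the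
painting game on `G` lasting exactly `t` rounds, in which Lister must mark each vertex `v`
in exactly `f v` of the `t` (nonempty) marked sets. -/
def PaintableIn {V : Type} [Fintype V] [DecidableEq V]
    (G : SimpleGraph V) (f : V → ℕ) (t : ℕ) : Prop :=
  PaintFromIn G t f Finset.univ

/-- `m(G,f)`: the minimum `t ≥ max {f v : v ∈ V(G)}` for which `G` is not
`[f,t]`-paintable. -/
noncomputable def mval {V : Type} [Fintype V] [DecidableEq V]
    (G : SimpleGraph V) (f : V → ℕ) : ℕ :=
  sInf {t | (∀ v, f v ≤ t) ∧ ¬ PaintableIn G f t}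

/-- `M(G,f)`: the maximum `t` for which `G` is not `[f,t]`-paintable. -/
noncomputable def Mval {V : Type} [Fintype V] [DecidableEq V]
    (G : SimpleGraph V) (f : V → ℕ) : ℕ :=
  sSup {t | ¬ PaintableIn G f t}

/-- `ListerForce G f U c`: in the painting game on `G` (uncolored set `U`, each vertex `v`
markable at most `f v` more times), Lister can force the appearance of an uncolorable vertex
(an uncolored vertex that can no longer be marked) while spending at most `c` in total,
where a round with marked set `M` costs `|M| - 1`. -/
def ListerForce {V : Type} [Fintype V] [DecidableEq V] (G : SimpleGraph V)
    (f : V → ℕ) (U : Finset V) (c : ℕ) : Prop :=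
  (∃ v ∈ U, f v = 0) ∨
    ∃ M : Finset V, M ⊆ U ∧ ∃ hne : M.Nonempty, ∃ hf : ∀ v ∈ M, 1 ≤ f v,
      ∃ c', M.card - 1 + c' ≤ c ∧
        ∀ X : Finset V, X ⊆ M → IndepOn G X →
          ListerForce G (decMark f M) (U \ X) c'
termination_by ∑ v, f v
decreasing_by exact decMark_lt f M hne hf

/-- `q(G,f)`: the minimum total cost `Σᵢ (|Vᵢ| - 1)` that Lister can guarantee while
forcing an uncolorable vertex, over plays in which each vertex `v` is marked at most
`f v` times. -/
noncomputable def qval {V : Type} [Fintype V] [DecidableEq V]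
    (G : SimpleGraph V) (f : V → ℕ) : ℕ :=
  sInf {c | ListerForce G f Finset.univ c}

/- # Graph containments -/

/-- `G` contains an odd cycle. -/
def HasOddCycle {V : Type} (G : SimpleGraph V) : Prop :=
  ∃ (v : V) (c : G.Walk v v), c.IsCycle ∧ Odd c.length

/-- `G` contains a triangle `C₃`. -/
def HasTriangle {V : Type} (G : SimpleGraph V) : Prop :=
  ∃ u v w : V, G.Adj u v ∧ G.Adj v w ∧ G.Adj u w

/-- `G` contains the theta graph `θ_{p,q,r}`: two vertices joined by three internally
disjoint paths with `p`, `q` and `r` edges respectively. -/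
def HasTheta {V : Type} (G : SimpleGraph V) (p q r : ℕ) : Prop :=
  ∃ (u v : V) (P Q R : G.Walk u v),
    P.IsPath ∧ Q.IsPath ∧ R.IsPath ∧
    P.length = p ∧ Q.length = q ∧ R.length = r ∧
    (∀ x, x ∈ P.support → x ∈ Q.support → x = u ∨ x = v) ∧
    (∀ x, x ∈ P.support → x ∈ R.support → x = u ∨ x = v) ∧
    (∀ x, x ∈ Q.support → x ∈ R.support → x = u ∨ x = v)

/-- `G` contains a graph of the form `C_m·P_k·C_n`: two cycles joined by a path, the
cycles being vertex disjoint, except that when the path is trivial (`k = 1`) the two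
cycles share exactly one vertex. -/
def HasDumbbell {V : Type} (G : SimpleGraph V) : Prop :=
  ∃ (a b : V) (c : G.Walk a a) (d : G.Walk b b) (W : G.Walk a b),
    c.IsCycle ∧ d.IsCycle ∧ W.IsPath ∧
    (∀ x, x ∈ c.support → x ∈ d.support → x = a ∧ x = b) ∧
    (∀ x, x ∈ W.support → x ∈ c.support → x = a) ∧
    (∀ x, x ∈ W.support → x ∈ d.support → x = b)

/-- `G` contains a copy of `H` as a (not necessarily induced) subgraph. -/
def ContainsCopy {W V : Type} (H : SimpleGraph W) (G : SimpleGraph V) : Prop :=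
  ∃ φ : H →g G, Function.Injective φ

/-- `G` contains a member of the family `𝔉₃`: some `θ_{p,q,r}` that is not isomorphic to
any `θ_{2,2,2k}`. -/
def ContainsF3 {V : Type} (G : SimpleGraph V) : Prop :=
  ∃ p q r : ℕ, HasTheta G p q r ∧ ∀ k : ℕ, ({p, q, r} : Multiset ℕ) ≠ {2, 2, 2 * k}

/-- `G` contains a member of the family `𝔉₄ = {θ_{2,2,2k} : k ≥ 2}`. -/
def ContainsF4 {V : Type} (G : SimpleGraph V) : Prop :=
  ∃ k : ℕ, 2 ≤ k ∧ HasTheta G 2 2 (2 * k)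

/- # The core of a graph -/

open Classical in
/-- Delete from `S` all vertices having exactly one neighbour (in `G`) inside `S`. -/
noncomputable def coreStep {V : Type} [DecidableEq V] (G : SimpleGraph V)
    (S : Finset V) : Finset V :=
  S.filter fun v => ¬ ((S.filter fun w => G.Adj v w).card = 1)

/-- The vertex set of the core of `G`: iteratively delete all vertices of degree 1. -/
noncomputable def coreSet {V : Type} [Fintype V] [DecidableEq V] (G : SimpleGraph V) :
    Finset V :=
  (coreStep G)^[Fintype.card V] Finset.univ

/-- The core of `G`: the subgraph of `G` obtained by the iterated removal of all
vertices of degree 1. -/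
noncomputable def coreGraph {V : Type} [Fintype V] [DecidableEq V] (G : SimpleGraph V) :
    SimpleGraph ↥((coreSet G : Set V)) :=
  G.induce (coreSet G : Set V)

end PaintGame

open SimpleGraph PaintGame

section
variable {V : Type} [Fintype V] [DecidableEq V] (G : SimpleGraph V)

lemma sum_decMark (f : V → ℕ) (M : Finset V) (hf : ∀ v ∈ M, 1 ≤ f v) :
    ∑ v, decMark f M v + M.card = ∑ v, f v := by
  have h1 : ∀ v ∈ Finset.univ, decMark f M v + (if v ∈ M then 1 else 0) = f v := by
    intro v _
    by_cases hv : v ∈ M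
    · have := hf v hv; simp [decMark, hv]; omega
    · simp [decMark, hv]
  calc ∑ v, decMark f M v + M.card
      = ∑ v, decMark f M v + ∑ v, (if v ∈ M then 1 else 0) := by
        congr 1
        rw [Finset.sum_ite_mem, Finset.univ_inter, Finset.card_eq_sum_ones]
    _ = ∑ v, (decMark f M v + (if v ∈ M then 1 else 0)) := (Finset.sum_add_distrib).symm
    _ = ∑ v, f v := Finset.sum_congr rfl h1

lemma paintFromIn_of_lt (t : ℕ) : ∀ (f : V → ℕ) (U : Finset V), ∑ v, f v < t →
    PaintFromIn G t f U := by
  induction t with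
  | zero => intro f U h; omega
  | succ t ih =>
    intro f U h
    intro M hne hf
    refine ⟨∅, by simp, by intro u hu; simp at hu, ?_⟩
    apply ih
    have := sum_decMark f M hf
    have hc : 1 ≤ M.card := Finset.card_pos.mpr hne
    omega

lemma drain (t : ℕ) : ∀ (f : V → ℕ) (U : Finset V) (c : V), c ∈ U → f c = 0 →
    ∑ v, f v = t → PaintFromIn G t f U → False := by
  induction t with
  | zero =>
    intro f U c hc hfc hs h
    rcases h with h | ⟨v, hv⟩
    · rw [h] at hc; simp at hc
    · exact hv (by
        have := Finset.sum_eq_zero_iff.mp hs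
        exact this v (Finset.mem_univ v))
  | succ t ih =>
    intro f U c hc hfc hs h
    have hx : ∃ x, 1 ≤ f x := by
      by_contra hno
      push_neg at hno
      have : ∑ v, f v = 0 := Finset.sum_eq_zero (fun v _ => by have := hno v; omega)
      omega
    obtain ⟨x, hx⟩ := hx
    have hxc : x ≠ c := fun h => by rw [h] at hx; omega
    obtain ⟨X, hXsub, hXind, hrec⟩ := h {x} ⟨x, by simp⟩ (by intro v hv; simp at hv; subst hv; exact hx)
    refine ih (decMark f {x}) (U \ X) c ?_ ?_ ?_ hrec
    · simp only [Finset.mem_sdiff]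
      refine ⟨hc, fun hcX => ?_⟩
      have := hXsub hcX
      simp at this
      exact hxc this.1.symm
    · simp [decMark, hxc.symm, hfc]
    · have := sum_decMark f {x} (by intro v hv; simp at hv; subst hv; exact hx)
      simp at this
      omega

end

section
variable {V : Type} [Fintype V] [DecidableEq V] (G : SimpleGraph V)

set_option maxHeartbeats 2000000 in
lemma painter_win (t : ℕ) : ∀ (f : V → ℕ) (U : Finset V),
    (t ≤ ∑ v, f v → ∀ v ∈ U, 1 ≤ f v) →
    ∑ v, f v ≤ t + 3 →
    (∑ v, f v = t + 1 → ∀ a ∈ U, ∀ b ∈ U, f a = 1 → f b = 1 → ¬ G.Adj a b) →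
    (∑ v, f v = t + 2 → (∀ a ∈ U, f a ≠ 1) ∨
      (¬ HasTriangle G ∧ ∀ a ∈ U, ∀ b ∈ U, f a = 1 → f b = 1 → a = b)) →
    (∑ v, f v = t + 3 → ¬ HasTriangle G ∧ ∀ a ∈ U, f a ≠ 1) →
    PaintFromIn G t f U := by
  induction t with
  | zero =>
    intro f U halive _ _ _ _
    show U = ∅ ∨ ∃ v, f v ≠ 0
    by_cases hs : ∑ v, f v = 0
    · left
      have h0 : ∀ v, f v = 0 := fun v => Finset.sum_eq_zero_iff.mp hs v (Finset.mem_univ v)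
      ext v
      simp only [Finset.notMem_empty, iff_false]
      intro hv
      have := halive (Nat.zero_le _) v hv
      have := h0 v
      omega
    · right
      by_contra hno
      push_neg at hno
      exact hs (Finset.sum_eq_zero fun v _ => hno v)
  | succ t ih =>
    intro f U halive0 hle h1 h2 h3
    intro M hMne hMf
    have hsum := sum_decMark f M hMf
    have hMc : 1 ≤ M.card := Finset.card_pos.mpr hMne
    by_cases hlow : ∑ v, f v < t + M.card
    · refine ⟨∅, by simp, by intro u hu; simp at hu, ?_⟩
      rw [Finset.sdiff_empty]
      exact paintFromIn_of_lt G t _ U (by omega)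
    · push_neg at hlow
      have halive : ∀ v ∈ U, 1 ≤ f v := halive0 (by omega)
      by_cases hadj : ∃ a ∈ M ∩ U, ∃ b ∈ M ∩ U, G.Adj a b
      · obtain ⟨a, ha, b, hb, hab⟩ := hadj
        have hneab : a ≠ b := G.ne_of_adj hab
        have haM : a ∈ M := (Finset.mem_inter.mp ha).1
        have haU : a ∈ U := (Finset.mem_inter.mp ha).2
        have hbM : b ∈ M := (Finset.mem_inter.mp hb).1
        have hbU : b ∈ U := (Finset.mem_inter.mp hb).2
        have hM2 : 2 ≤ M.card := Finset.one_lt_card.mpr ⟨a, haM, b, hbM, hneab⟩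
        have hcase : ∑ v, f v = t + M.card ∨ ∑ v, f v = t + M.card + 1 ∨
            ∑ v, f v = t + M.card + 2 := by omega
        rcases hcase with hc0 | hc1 | hc2
        · -- e' = 0 : color all critical marked vertices
          refine ⟨(M ∩ U).filter (fun v => f v = 1), Finset.filter_subset _ _, ?_, ?_⟩
          · -- independence: the filter is a subsingleton
            have hsub : ∀ x ∈ (M ∩ U).filter (fun v => f v = 1),
                ∀ y ∈ (M ∩ U).filter (fun v => f v = 1), x = y := by
              intro x hx y hy
              simp only [Finset.mem_filter, Finset.mem_inter] at hx hy
              have hcard : M.card = 2 ∨ M.card = 3 ∨ M.card = 4 := by omega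
              rcases hcard with h | h | h
              · -- Σ = (t+1)+1 : critical vertices independent
                have hMab : M = {a, b} := by
                  refine (Finset.eq_of_subset_of_card_le ?_ ?_).symm
                  · intro z hz
                    simp only [Finset.mem_insert, Finset.mem_singleton] at hz
                    rcases hz with rfl | rfl <;> assumption
                  · rw [Finset.card_pair hneab]; omega
                by_contra hxy
                have hadjxy : G.Adj x y := by
                  have hx' : x = a ∨ x = b := by
                    have := hx.1.1; rw [hMab] at this; simpa using this
                  have hy' : y = a ∨ y = b := by
                    have := hy.1.1; rw [hMab] at this; simpa using this
                  rcases hx' with rfl | rfl <;> rcases hy' with rfl | rfl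
                  · exact absurd rfl hxy
                  · exact hab
                  · exact hab.symm
                  · exact absurd rfl hxy
                exact h1 (by omega) x hx.1.2 y hy.1.2 hx.2 hy.2 hadjxy
              · rcases h2 (by omega) with hD | ⟨_, hD1⟩
                · exact absurd hx.2 (hD x hx.1.2)
                · exact hD1 x hx.1.2 y hy.1.2 hx.2 hy.2
              · exact absurd hx.2 ((h3 (by omega)).2 x hx.1.2)
            intro u hu w hw
            rw [hsub u hu w hw]
            exact G.irrefl
          · -- recursion, e' = 0 : only aliveness needed
            apply ih
            · intro _ v hv
              simp only [Finset.mem_sdiff, Finset.mem_filter, Finset.mem_inter] at hv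
              simp only [decMark]
              split_ifs with hvM
              · have h1v := halive v hv.1
                have h2v : f v ≠ 1 := fun he => hv.2 ⟨⟨hvM, hv.1⟩, he⟩
                omega
              · exact halive v hv.1
            all_goals omega
        · -- e' = 1
          have hcard : M.card = 2 ∨ M.card = 3 := by omega
          rcases hcard with hMcard | hMcard
          · -- pair round, Σ = (t+1)+2
            have hMab : M = {a, b} := by
              refine (Finset.eq_of_subset_of_card_le ?_ ?_).symm
              · intro z hz
                simp only [Finset.mem_insert, Finset.mem_singleton] at hz
                rcases hz with rfl | rfl <;> assumption
              · rw [Finset.card_pair hneab]; omega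
            have hclaim : ∃ p s : V, M = {p, s} ∧ p ∈ U ∧ s ∈ U ∧ G.Adj p s ∧ 2 ≤ f s ∧
                ∀ d ∈ U, d ∉ M → f d = 1 → ¬ G.Adj s d := by
              rcases h2 (by omega) with hD | ⟨hTri, hD1⟩
              · refine ⟨a, b, hMab, haU, hbU, hab, ?_, ?_⟩
                · have := halive b hbU; have := hD b hbU; omega
                · intro d hd _ hfd _
                  exact hD d hd hfd
              · by_cases hfa : f a = 1
                · refine ⟨a, b, hMab, haU, hbU, hab, ?_, ?_⟩
                  · have := halive b hbU
                    have hfb : f b ≠ 1 := fun hfb => hneab (hD1 a haU b hbU hfa hfb)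
                    omega
                  · intro d hd hdM hfd _
                    exact hdM (by rw [hMab]; simp [hD1 d hd a haU hfd hfa])
                · by_cases hfb : f b = 1
                  · refine ⟨b, a, by rw [hMab, Finset.pair_comm], hbU, haU, hab.symm, ?_, ?_⟩
                    · have := halive a haU; omega
                    · intro d hd hdM hfd _
                      exact hdM (by rw [hMab]; simp [hD1 d hd b hbU hfd hfb])
                  · by_cases hbad : ∃ d ∈ U, d ∉ M ∧ f d = 1 ∧ G.Adj b d
                    · obtain ⟨d, hdU, hdM, hfd, hbd⟩ := hbad
                      refine ⟨b, a, by rw [hMab, Finset.pair_comm], hbU, haU, hab.symm, ?_, ?_⟩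
                      · have := halive a haU; omega
                      · intro d' hd' hd'M hfd' had'
                        have : d' = d := hD1 d' hd' d hdU hfd' hfd
                        subst this
                        exact hTri ⟨a, b, d', hab, hbd, had'⟩
                    · push_neg at hbad
                      refine ⟨a, b, hMab, haU, hbU, hab, ?_, ?_⟩
                      · have := halive b hbU; omega
                      · intro d hd hdM hfd hbd
                        exact hbad d hd hdM hfd hbd
            obtain ⟨p, s, hMps, hpU, hsU, hps, hfs, hsafe⟩ := hclaim
            have hpM : p ∈ M := by rw [hMps]; simp
            have hnps : p ≠ s := G.ne_of_adj hps
            refine ⟨{p}, by simp [hpM, hpU], by intro u hu w hw; simp at hu hw; subst hu; subst hw; exact G.irrefl, ?_⟩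
            apply ih
            · intro _ v hv
              simp only [Finset.mem_sdiff, Finset.mem_singleton] at hv
              simp only [decMark]
              split_ifs with hvM
              · have : v = s := by
                  rw [hMps] at hvM; simp only [Finset.mem_insert, Finset.mem_singleton] at hvM
                  tauto
                subst this; omega
              · exact halive v hv.1
            · omega
            · intro _ x hx y hy hfx hfy
              simp only [Finset.mem_sdiff, Finset.mem_singleton] at hx hy
              simp only [decMark] at hfx hfy
              have hxs : x = s ∨ (x ∉ M ∧ f x = 1) := by
                by_cases hxM : x ∈ M
                · left
                  rw [hMps] at hxM; simp only [Finset.mem_insert, Finset.mem_singleton] at hxM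
                  tauto
                · right; rw [if_neg hxM] at hfx; exact ⟨hxM, hfx⟩
              have hys : y = s ∨ (y ∉ M ∧ f y = 1) := by
                by_cases hyM : y ∈ M
                · left
                  rw [hMps] at hyM; simp only [Finset.mem_insert, Finset.mem_singleton] at hyM
                  tauto
                · right; rw [if_neg hyM] at hfy; exact ⟨hyM, hfy⟩
              rcases hxs with rfl | ⟨hxM, hfx1⟩ <;> rcases hys with rfl | ⟨hyM, hfy1⟩
              · exact G.irrefl
              · intro hxy; exact hsafe y hy.1 hyM hfy1 hxy
              · intro hxy; exact hsafe x hx.1 hxM hfx1 hxy.symm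
              · rcases h2 (by omega) with hD | ⟨_, hD1⟩
                · exact absurd hfx1 (hD x hx.1)
                · rw [hD1 x hx.1 y hy.1 hfx1 hfy1]; exact G.irrefl
            · omega
            · omega
          · -- triple round, Σ = (t+1)+3
            obtain ⟨hTri, hD⟩ := h3 (by omega)
            by_cases hc : ∃ c ∈ M ∩ U, c ≠ a ∧ c ≠ b
            · obtain ⟨c, hc', hca, hcb⟩ := hc
              have hcM : c ∈ M := (Finset.mem_inter.mp hc').1
              have hcU : c ∈ U := (Finset.mem_inter.mp hc').2
              have hMabc : M = {a, b, c} := by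
                refine (Finset.eq_of_subset_of_card_le ?_ ?_).symm
                · intro z hz
                  simp only [Finset.mem_insert, Finset.mem_singleton] at hz
                  rcases hz with rfl | rfl | rfl <;> assumption
                · have : ({a, b, c} : Finset V).card = 3 := by
                    rw [Finset.card_insert_of_notMem (by simp [hneab, hca.symm]),
                      Finset.card_pair hcb.symm]
                  omega
              -- pick an independent pair to color, leaving one survivor
              have hpick : ∃ x y s : V, ({x, y, s} : Finset V) = {a, b, c} ∧ ¬ G.Adj x y ∧
                  x ≠ y ∧ s ∈ U ∧ x ∈ U ∧ y ∈ U := by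
                by_cases hac : G.Adj a c
                · by_cases hbc : G.Adj b c
                  · exact absurd ⟨a, b, c, hab, hbc, hac⟩ hTri
                  · exact ⟨b, c, a, by ext z; simp; tauto, hbc, hcb.symm, haU, hbU, hcU⟩
                · exact ⟨a, c, b, by ext z; simp; tauto, hac, hca.symm, hbU, haU, hcU⟩
              obtain ⟨x, y, s, hxys, hnxy, hxy, hsU, hxU, hyU⟩ := hpick
              have hxM : x ∈ M := by rw [hMabc, ← hxys]; simp
              have hyM : y ∈ M := by rw [hMabc, ← hxys]; simp
              refine ⟨{x, y}, ?_, ?_, ?_⟩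
              · intro z hz
                simp only [Finset.mem_insert, Finset.mem_singleton] at hz
                rcases hz with rfl | rfl <;> simp [Finset.mem_inter, hxM, hxU, hyM, hyU]
              · intro u hu w hw
                simp only [Finset.mem_insert, Finset.mem_singleton] at hu hw
                rcases hu with rfl | rfl <;> rcases hw with rfl | rfl
                · exact G.irrefl
                · exact hnxy
                · exact fun h => hnxy h.symm
                · exact G.irrefl
              · apply ih
                · intro _ v hv
                  simp only [Finset.mem_sdiff, Finset.mem_insert, Finset.mem_singleton] at hv
                  simp only [decMark]
                  split_ifs with hvM
                  · have := halive v hv.1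
                    have := hD v hv.1
                    omega
                  · exact halive v hv.1
                · omega
                · intro _ z hz w hw hfz hfw
                  simp only [Finset.mem_sdiff, Finset.mem_insert, Finset.mem_singleton] at hz hw
                  simp only [decMark] at hfz hfw
                  have hzs : z = s := by
                    by_cases hzM : z ∈ M
                    · have : z = x ∨ z = y ∨ z = s := by
                        rw [hMabc, ← hxys] at hzM
                        simpa using hzM
                      tauto
                    · rw [if_neg hzM] at hfz
                      exact absurd hfz (hD z hz.1)
                  have hws : w = s := by
                    by_cases hwM : w ∈ M
                    · have : w = x ∨ w = y ∨ w = s := by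
                        rw [hMabc, ← hxys] at hwM
                        simpa using hwM
                      tauto
                    · rw [if_neg hwM] at hfw
                      exact absurd hfw (hD w hw.1)
                  subst hzs; subst hws
                  exact G.irrefl
                · omega
                · omega
            · -- all marked uncolored vertices are a or b
              push_neg at hc
              have hMU : ∀ z ∈ M ∩ U, z = a ∨ z = b := by
                intro z hz
                by_contra hzz
                push_neg at hzz
                exact hzz.2 (hc z hz hzz.1)
              refine ⟨{a}, by simp [haM, haU], by intro u hu w hw; simp at hu hw; subst hu; subst hw; exact G.irrefl, ?_⟩
              apply ih
              · intro _ v hv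
                simp only [Finset.mem_sdiff, Finset.mem_singleton] at hv
                simp only [decMark]
                split_ifs with hvM
                · have := halive v hv.1
                  have := hD v hv.1
                  omega
                · exact halive v hv.1
              · omega
              · intro _ z hz w hw hfz hfw
                simp only [Finset.mem_sdiff, Finset.mem_singleton] at hz hw
                simp only [decMark] at hfz hfw
                have hzb : z = b := by
                  by_cases hzM : z ∈ M
                  · rcases hMU z (Finset.mem_inter.mpr ⟨hzM, hz.1⟩) with rfl | rfl
                    · exact absurd rfl hz.2
                    · rfl
                  · rw [if_neg hzM] at hfz
                    exact absurd hfz (hD z hz.1)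
                have hwb : w = b := by
                  by_cases hwM : w ∈ M
                  · rcases hMU w (Finset.mem_inter.mpr ⟨hwM, hw.1⟩) with rfl | rfl
                    · exact absurd rfl hw.2
                    · rfl
                  · rw [if_neg hwM] at hfw
                    exact absurd hfw (hD w hw.1)
                subst hzb; subst hwb
                exact G.irrefl
              · omega
              · omega
        · -- e' = 2 : pair round with Σ = (t+1)+3
          have hMcard : M.card = 2 := by omega
          obtain ⟨hTri, hD⟩ := h3 (by omega)
          have hMab : M = {a, b} := by
            refine (Finset.eq_of_subset_of_card_le ?_ ?_).symm
            · intro z hz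
              simp only [Finset.mem_insert, Finset.mem_singleton] at hz
              rcases hz with rfl | rfl <;> assumption
            · rw [Finset.card_pair hneab]; omega
          refine ⟨{a}, by simp [haM, haU], by intro u hu w hw; simp at hu hw; subst hu; subst hw; exact G.irrefl, ?_⟩
          apply ih
          · intro _ v hv
            simp only [Finset.mem_sdiff, Finset.mem_singleton] at hv
            simp only [decMark]
            split_ifs with hvM
            · have := halive v hv.1
              have := hD v hv.1
              omega
            · exact halive v hv.1
          · omega
          · omega
          · intro _
            right
            refine ⟨hTri, ?_⟩
            intro z hz w hw hfz hfw
            simp only [Finset.mem_sdiff, Finset.mem_singleton] at hz hw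
            simp only [decMark] at hfz hfw
            have hzb : z = b := by
              by_cases hzM : z ∈ M
              · rw [hMab] at hzM
                simp only [Finset.mem_insert, Finset.mem_singleton] at hzM
                rcases hzM with rfl | rfl
                · exact absurd rfl hz.2
                · rfl
              · rw [if_neg hzM] at hfz
                exact absurd hfz (hD z hz.1)
            have hwb : w = b := by
              by_cases hwM : w ∈ M
              · rw [hMab] at hwM
                simp only [Finset.mem_insert, Finset.mem_singleton] at hwM
                rcases hwM with rfl | rfl
                · exact absurd rfl hw.2
                · rfl
              · rw [if_neg hwM] at hfw
                exact absurd hfw (hD w hw.1)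
            rw [hzb, hwb]
          · omega
      · -- the marked uncolored set is independent: color all of it
        push_neg at hadj
        refine ⟨M ∩ U, Finset.Subset.refl _, hadj, ?_⟩
        have hfU : ∀ v ∈ U \ (M ∩ U), decMark f M v = f v ∧ v ∉ M := by
          intro v hv
          simp only [Finset.mem_sdiff, Finset.mem_inter] at hv
          have hvM : v ∉ M := fun h => hv.2 ⟨h, hv.1⟩
          simp [decMark, hvM]
        apply ih
        · intro _ v hv
          rw [(hfU v hv).1]
          exact halive v (Finset.mem_sdiff.mp hv).1
        · omega
        · -- Σ' = t+1
          intro hS x hx y hy hfx hfy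
          rw [(hfU x hx).1] at hfx
          rw [(hfU y hy).1] at hfy
          have hxU := (Finset.mem_sdiff.mp hx).1
          have hyU := (Finset.mem_sdiff.mp hy).1
          have hcard : M.card = 1 ∨ M.card = 2 ∨ M.card = 3 := by omega
          rcases hcard with h | h | h
          · exact h1 (by omega) x hxU y hyU hfx hfy
          · rcases h2 (by omega) with hD | ⟨_, hD1⟩
            · exact absurd hfx (hD x hxU)
            · rw [hD1 x hxU y hyU hfx hfy]; exact G.irrefl
          · exact absurd hfx ((h3 (by omega)).2 x hxU)
        · -- Σ' = t+2
          intro hS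
          have hcard : M.card = 1 ∨ M.card = 2 := by omega
          rcases hcard with h | h
          · rcases h2 (by omega) with hD | ⟨hTri, hD1⟩
            · left
              intro x hx
              rw [(hfU x hx).1]
              exact hD x (Finset.mem_sdiff.mp hx).1
            · right
              refine ⟨hTri, ?_⟩
              intro x hx y hy hfx hfy
              rw [(hfU x hx).1] at hfx
              rw [(hfU y hy).1] at hfy
              exact hD1 x (Finset.mem_sdiff.mp hx).1 y (Finset.mem_sdiff.mp hy).1 hfx hfy
          · left
            intro x hx
            rw [(hfU x hx).1]
            exact (h3 (by omega)).2 x (Finset.mem_sdiff.mp hx).1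
        · -- Σ' = t+3
          intro hS
          have h' := h3 (by omega)
          refine ⟨h'.1, ?_⟩
          intro x hx
          rw [(hfU x hx).1]
          exact h'.2 x (Finset.mem_sdiff.mp hx).1

end

section
variable {V : Type} [Fintype V] [DecidableEq V] (G : SimpleGraph V)

lemma paintable_of_card_le_one (h : Fintype.card V ≤ 1) :
    Paintable G (fun _ => 2) := by
  have hsub : ∀ x y : V, x = y := fun x y => Fintype.card_le_one_iff.mp h x y
  unfold Paintable
  rw [PaintFrom]
  by_cases hU : (Finset.univ : Finset V) = ∅
  · exact Or.inl hU
  · right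
    refine ⟨fun v _ => by norm_num, ?_⟩
    intro M hMU hne hf
    refine ⟨M, Finset.Subset.refl _, ?_, ?_⟩
    · intro x hx y hy
      rw [hsub x y]
      exact G.irrefl
    · rw [PaintFrom]
      left
      obtain ⟨m, hm⟩ := hne
      ext z
      simp only [Finset.mem_sdiff, Finset.notMem_empty, iff_false, not_and, not_not]
      intro _
      rw [hsub z m]
      exact hm

lemma not_paintableIn_of_triangle (hT : HasTriangle G) :
    ¬ PaintableIn G (fun _ => 2) (2 * Fintype.card V - 3) := by
  obtain ⟨u, v, w, huv, hvw, huw⟩ := hT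
  have hneuv : u ≠ v := G.ne_of_adj huv
  have hnevw : v ≠ w := G.ne_of_adj hvw
  have hneuw : u ≠ w := G.ne_of_adj huw
  have hT3 : ({u, v, w} : Finset V).card = 3 := by
    rw [Finset.card_insert_of_notMem (by simp [hneuv, hneuw]), Finset.card_pair hnevw]
  have hcard3 : 3 ≤ Fintype.card V := by
    calc 3 = ({u, v, w} : Finset V).card := hT3.symm
    _ ≤ Fintype.card V := by rw [← Finset.card_univ]; exact Finset.card_le_univ _
  intro h
  unfold PaintableIn at h
  obtain ⟨t0, ht0⟩ : ∃ t0, 2 * Fintype.card V - 3 = t0 + 1 + 1 := ⟨2 * Fintype.card V - 5, by omega⟩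
  rw [ht0] at h
  obtain ⟨X1, hX1sub, hX1ind, h2⟩ := h {u, v, w} ⟨u, by simp⟩ (fun z _ => by norm_num)
  have hpick : ∃ a b, a ∈ ({u, v, w} : Finset V) ∧ b ∈ ({u, v, w} : Finset V) ∧ G.Adj a b ∧
      a ∉ X1 ∧ b ∉ X1 := by
    by_cases hu1 : u ∈ X1
    · exact ⟨v, w, by simp, by simp, hvw,
        fun hv1 => hX1ind u hu1 v hv1 huv, fun hw1 => hX1ind u hu1 w hw1 huw⟩
    · by_cases hv1 : v ∈ X1
      · exact ⟨u, w, by simp, by simp, huw, hu1, fun hw1 => hX1ind v hv1 w hw1 hvw⟩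
      · exact ⟨u, v, by simp, by simp, huv, hu1, hv1⟩
  obtain ⟨a, b, haT, hbT, hab, haX, hbX⟩ := hpick
  have hfa1 : ∀ z ∈ ({a, b} : Finset V), 1 ≤ decMark (fun _ => 2) {u, v, w} z := by
    intro z _
    simp only [decMark]
    split <;> omega
  obtain ⟨X2, hX2sub, hX2ind, h3⟩ := h2 {a, b} ⟨a, by simp⟩ hfa1
  set c := if a ∈ X2 then b else a with hc
  have hcT : c ∈ ({u, v, w} : Finset V) := by
    rw [hc]; split <;> assumption
  have hcX1 : c ∉ X1 := by
    rw [hc]; split <;> assumption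
  have hcab : c ∈ ({a, b} : Finset V) := by
    rw [hc]; split <;> simp
  have hcX2 : c ∉ X2 := by
    rw [hc]
    split_ifs with ha2
    · intro hb2
      exact hX2ind a ha2 b hb2 hab
    · exact ha2
  refine drain G t0 _ _ c ?_ ?_ ?_ h3
  · simp only [Finset.mem_sdiff, Finset.mem_univ, true_and]
    exact ⟨hcX1, hcX2⟩
  · simp only [decMark, if_pos hcab, if_pos hcT]
  · have hs1 := sum_decMark (fun _ => (2 : ℕ)) {u, v, w} (fun z _ => by norm_num)
    have hs2 := sum_decMark (decMark (fun _ => 2) {u, v, w}) {a, b} hfa1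
    rw [Finset.card_pair (G.ne_of_adj hab)] at hs2
    rw [hT3] at hs1
    beta_reduce at hs1
    rw [Finset.sum_const, Finset.card_univ, smul_eq_mul, mul_comm] at hs1
    omega

end

section
variable {V : Type} [Fintype V] [DecidableEq V] (G : SimpleGraph V)

omit [DecidableEq V] in
lemma sum_two : ∑ _v : V, (2 : ℕ) = 2 * Fintype.card V := by
  rw [Finset.sum_const, Finset.card_univ, smul_eq_mul, mul_comm]

lemma paintableIn_of_big (t : ℕ) (h2 : 2 * Fintype.card V ≤ t + 2) :
    PaintableIn G (fun _ => 2) t := by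
  have hs : ∑ _v : V, (2 : ℕ) = 2 * Fintype.card V := sum_two
  apply painter_win
  · intro _ v _; norm_num
  · omega
  · intro _ a _ b _ ha _
    norm_num at ha
  · intro _
    left
    intro a _
    norm_num
  · intro h
    exfalso
    omega

lemma paintableIn_of_big' (hTri : ¬ HasTriangle G) (t : ℕ)
    (h2 : 2 * Fintype.card V ≤ t + 3) :
    PaintableIn G (fun _ => 2) t := by
  have hs : ∑ _v : V, (2 : ℕ) = 2 * Fintype.card V := sum_two
  apply painter_win
  · intro _ v _; norm_num
  · omega
  · intro _ a _ b _ ha _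
    norm_num at ha
  · intro _
    left
    intro a _
    norm_num
  · intro _
    refine ⟨hTri, ?_⟩
    intro a _
    norm_num

end


/-- Theorem `M2`.  Let `G` be a graph on `n` vertices that is not
2-paintable.  Then `M(G) ≤ 2n − 3`, and `M(G) = 2n − 3` if and only if `G` contains a
triangle `C₃`. -/
theorem Mval_le_two_mul_card_sub_three {V : Type} [Fintype V] [DecidableEq V]
    (G : SimpleGraph V) (hG : ¬ PaintGame.Paintable G (fun _ => 2)) :
    PaintGame.Mval G (fun _ => 2) ≤ 2 * Fintype.card V - 3 ∧
    (PaintGame.Mval G (fun _ => 2) = 2 * Fintype.card V - 3 ↔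
      PaintGame.HasTriangle G) := by
  have hub : ∀ t ∈ {t | ¬ PaintableIn G (fun _ => 2) t}, t ≤ 2 * Fintype.card V - 3 := by
    intro t ht
    by_contra hc
    exact ht (paintableIn_of_big G t (by omega))
  have hMle : Mval G (fun _ => 2) ≤ 2 * Fintype.card V - 3 := csSup_le' hub
  have hn2 : ¬ HasTriangle G → Fintype.card V < 2 →
      Mval G (fun _ => 2) = 2 * Fintype.card V - 3 → False := by
    intro _ h _
    exact hG (paintable_of_card_le_one G (by omega))
  refine ⟨hMle, ?_, ?_⟩
  · intro hM
    by_contra hTri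
    by_cases hcard : Fintype.card V < 2
    · exact hn2 hTri hcard hM
    · have hle4 : Mval G (fun _ => 2) ≤ 2 * Fintype.card V - 4 := by
        apply csSup_le'
        intro t ht
        by_contra hc
        exact ht (paintableIn_of_big' G hTri t (by omega))
      omega
  · intro hTri
    refine le_antisymm hMle ?_
    exact le_csSup ⟨2 * Fintype.card V - 3, hub⟩ (not_paintableIn_of_triangle G hTri)
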